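/- Let Ω = {0,1} with 𝓕 = 2^Ω and ℙ{0} = ℙ{1} = 1/2, let 𝒢 = {G} with G ≡ 1, and ℋ = {H₀} with H₀(0) = 1/2 and H₀(1) = 3/2. Then V(x) = 2x for 0 ≤ x < 1/4, V(x) = (2x+1)/3 for 1/4 ≤ x < 1, and V(x) = 1 for x ≥ 1; while V₁(x) = 0 for 0 ≤ x < 1/4, V₁(x) = 1/2 for 1/4 ≤ x < 1, and V₁(x) = 1 for x ≥ 1. In particular V₁(x) < V(x) for every x ∈ (0,1) with x ≠ 1/4, so the pure testing value can be strictly smaller than the randomized testing value. -/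

import Mathlib

/-! On the two-point space a test is a pair `(a, b) = (X 0, X 1) ∈ [0,1]²`; its power against
`G ≡ 1` is `(a + b) / 2` and its size under `H₀` is `a / 4 + 3 b / 4`. So `V` is the value of a
linear program in two variables, maximised by spending the budget first on the cheap point `0` and
then on `1`, while `V₁` only sees the four corners of the square, whose powers are `0`, `1/2`, `1`. -/

open MeasureTheory

namespace QH

variable {Ω : Type*} [MeasurableSpace Ω]

/-- The set of nonnegative measurable random variables. -/
def L0plus (Ω : Type*) [MeasurableSpace Ω] : Set (Ω → ℝ) :=
  {f | Measurable f ∧ ∀ ω, 0 ≤ f ω}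

/-- A randomized test: a measurable function with values in `[0,1]`. -/
def IsRandTest (X : Ω → ℝ) : Prop :=
  Measurable X ∧ ∀ ω, X ω ∈ Set.Icc (0 : ℝ) 1

/-- The feasible randomized tests for significance level `x` and null collection `H`. -/
def Tests (μ : Measure Ω) (H : Set (Ω → ℝ)) (x : ℝ) : Set (Ω → ℝ) :=
  {X | IsRandTest X ∧ ∀ h ∈ H, ∫ ω, h ω * X ω ∂μ ≤ x}

/-- The worst-case power of a test `X` over the alternative collection `G`. -/
noncomputable def powerInf (μ : Measure Ω) (G : Set (Ω → ℝ)) (X : Ω → ℝ) : ℝ :=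
  sInf ((fun g => ∫ ω, g ω * X ω ∂μ) '' G)

/-- The value of the randomized composite hypothesis testing problem. -/
noncomputable def V (μ : Measure Ω) (G H : Set (Ω → ℝ)) (x : ℝ) : ℝ :=
  sSup (powerInf μ G '' Tests μ H x)

/-- The value of the pure composite hypothesis testing problem. -/
noncomputable def V1 (μ : Measure Ω) (G H : Set (Ω → ℝ)) (x : ℝ) : ℝ :=
  sSup (powerInf μ G '' {X ∈ Tests μ H x | ∀ ω, X ω = 0 ∨ X ω = 1})

/-- The set `ℋₓ` of nonnegative random variables that satisfy the budget
constraint against every feasible randomized test. -/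
def HxSet (μ : Measure Ω) (H : Set (Ω → ℝ)) (x : ℝ) : Set (Ω → ℝ) :=
  {h | h ∈ L0plus Ω ∧ ∀ X ∈ Tests μ H x, ∫ ω, h ω * X ω ∂μ ≤ x}

/-- A set of (nonnegative) random variables is closed under convergence in probability,
as a subset of `L⁰⁺`. -/
def ClosedInProb (μ : Measure Ω) (S : Set (Ω → ℝ)) : Prop :=
  ∀ (f : ℕ → Ω → ℝ) (g : Ω → ℝ), (∀ n, f n ∈ S) → g ∈ L0plus Ω →
    TendstoInMeasure μ f Filter.atTop g → g ∈ S

/-- The closure of a set of random variables under convergence in probability. -/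
def clProb (μ : Measure Ω) (S : Set (Ω → ℝ)) : Set (Ω → ℝ) :=
  {g | ∃ f : ℕ → Ω → ℝ, (∀ n, f n ∈ S) ∧ TendstoInMeasure μ f Filter.atTop g}

/-- Assumption (A1): `𝒢, ℋ ⊆ L⁰⁺`, `sup_{X ∈ 𝒢∪ℋ} 𝔼[X] < ∞`, and `𝒢` is convex and
closed under convergence in probability. -/
def A1 (μ : Measure Ω) (G H : Set (Ω → ℝ)) : Prop :=
  G ⊆ L0plus Ω ∧ H ⊆ L0plus Ω ∧ (∀ f ∈ G ∪ H, Integrable f μ) ∧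
  BddAbove ((fun f => ∫ ω, f ω ∂μ) '' (G ∪ H)) ∧
  Convex ℝ G ∧ ClosedInProb μ G

/-- The smallest σ-algebra making every random variable in `G ∪ H` measurable. -/
def sigmaGen (G H : Set (Ω → ℝ)) : MeasurableSpace Ω :=
  ⨆ f ∈ G ∪ H, MeasurableSpace.comap f inferInstance

/-- The Neyman–Pearson conditions at level `x` for the tuple `(Ĝ, Ĥ, â, X̂, B)`. -/
def NPconds (μ : Measure Ω) (G H : Set (Ω → ℝ)) (x : ℝ)
    (Ghat Hhat : Ω → ℝ) (ahat : ℝ) (Xhat B : Ω → ℝ) : Prop :=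
  Ghat ∈ G ∧ Hhat ∈ clProb μ (convexHull ℝ H) ∧ 0 ≤ ahat ∧ Xhat ∈ Tests μ H x ∧
  Measurable B ∧ (∀ ω, B ω ∈ Set.Icc (0 : ℝ) 1) ∧
  (∀ ω, Xhat ω = (if ahat * Hhat ω < Ghat ω then 1 else 0)
      + B ω * (if Ghat ω = ahat * Hhat ω then 1 else 0)) ∧
  (∀ h ∈ H, ∫ ω, h ω * Xhat ω ∂μ ≤ ∫ ω, Hhat ω * Xhat ω ∂μ) ∧
  (∫ ω, Hhat ω * Xhat ω ∂μ = x) ∧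
  (∀ g ∈ G, ∫ ω, Ghat ω * Xhat ω ∂μ ≤ ∫ ω, g ω * Xhat ω ∂μ)

end QH

/-- The uniform probability measure on the two-point space `Ω = {0,1}` (here `Bool`,
with `ω = 0` encoded as `false` and `ω = 1` as `true`). -/
noncomputable def QH.muTwo : MeasureTheory.Measure Bool :=
  (1 / 2 : ENNReal) • (MeasureTheory.Measure.dirac false + MeasureTheory.Measure.dirac true)

namespace QH

section General

variable {Ω : Type*} [MeasurableSpace Ω] {μ : Measure Ω}

theorem powerInf_singleton_one (X : Ω → ℝ) :
    powerInf μ {fun _ => 1} X = ∫ ω, X ω ∂μ := by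
  simp only [powerInf, Set.image_singleton, csInf_singleton, one_mul]

theorem mem_Tests_singleton {h X : Ω → ℝ} {x : ℝ} :
    X ∈ Tests μ {h} x ↔ IsRandTest X ∧ ∫ ω, h ω * X ω ∂μ ≤ x := by
  simp only [Tests, Set.mem_ofPred_eq, Set.mem_singleton_iff, forall_eq]

end General

theorem integral_muTwo (f : Bool → ℝ) : ∫ b, f b ∂muTwo = (f false + f true) / 2 := by
  rw [muTwo, integral_smul_measure, integral_add_measure Integrable.of_finite Integrable.of_finite,
    integral_dirac, integral_dirac]
  simp only [ENNReal.toReal_div, ENNReal.toReal_one, ENNReal.toReal_ofNat, smul_eq_mul]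
  ring

theorem isRandTest_bool_iff {X : Bool → ℝ} : IsRandTest X ↔ ∀ b, X b ∈ Set.Icc (0 : ℝ) 1 :=
  and_iff_right (measurable_of_countable X)

def achievablePowers (S : Set ℝ) (x : ℝ) : Set ℝ :=
  {v | ∃ a ∈ S, ∃ b ∈ S, a / 4 + 3 * b / 4 ≤ x ∧ (a + b) / 2 = v}

theorem powerInf_image_eq_achievablePowers {S : Set ℝ} (hS : S ⊆ Set.Icc 0 1) (x : ℝ) :
    powerInf muTwo {fun _ => 1} ''
        {X ∈ Tests muTwo {fun b => if b then (3 / 2 : ℝ) else 1 / 2} x | ∀ b, X b ∈ S} =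
      achievablePowers S x := by
  have size (X : Bool → ℝ) :
      ∫ ω, (if ω then (3 / 2 : ℝ) else 1 / 2) * X ω ∂muTwo = X false / 4 + 3 * X true / 4 := by
    rw [integral_muTwo]; simp only [Bool.false_eq_true, if_false, if_true]; ring
  ext v
  simp only [Set.mem_image, Set.mem_ofPred_eq, mem_Tests_singleton, isRandTest_bool_iff, size,
    powerInf_singleton_one, integral_muTwo, achievablePowers]
  constructor
  · rintro ⟨X, ⟨⟨-, hsize⟩, hXS⟩, rfl⟩
    exact ⟨X false, hXS false, X true, hXS true, hsize, rfl⟩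
  · rintro ⟨a, ha, b, hb, hsize, rfl⟩
    have hab (ω : Bool) : (bif ω then b else a) ∈ S := by cases ω <;> assumption
    exact ⟨fun ω => bif ω then b else a, ⟨⟨fun ω => hS (hab ω), hsize⟩, hab⟩, rfl⟩

theorem pair_subset_Icc : ({0, 1} : Set ℝ) ⊆ Set.Icc 0 1 := by
  simp [Set.insert_subset_iff]

section Values

variable {x : ℝ}

theorem isGreatest_achievablePowers_of_one_le {S : Set ℝ} (hS : S ⊆ Set.Icc 0 1) (h1 : 1 ∈ S)
    (hx : 1 ≤ x) : IsGreatest (achievablePowers S x) 1 := by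
  refine ⟨⟨1, h1, 1, h1, by linarith, by norm_num⟩, ?_⟩
  rintro v ⟨a, ha, b, hb, -, rfl⟩
  linarith [(hS ha).2, (hS hb).2]

theorem isGreatest_achievablePowers_Icc_of_lt_quarter (hx0 : 0 ≤ x) (hx : x < 1 / 4) :
    IsGreatest (achievablePowers (Set.Icc 0 1) x) (2 * x) := by
  refine ⟨⟨4 * x, ⟨by linarith, by linarith⟩, 0, ⟨le_rfl, zero_le_one⟩, by linarith, by ring⟩, ?_⟩
  rintro v ⟨a, -, b, ⟨hb, -⟩, hsize, rfl⟩
  linarith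

theorem isGreatest_achievablePowers_Icc_of_quarter_le (hx0 : 1 / 4 ≤ x) (hx : x < 1) :
    IsGreatest (achievablePowers (Set.Icc 0 1) x) ((2 * x + 1) / 3) := by
  refine ⟨⟨1, ⟨zero_le_one, le_rfl⟩, (4 * x - 1) / 3, ⟨by linarith, by linarith⟩, by linarith,
    by ring⟩, ?_⟩
  rintro v ⟨a, ⟨-, ha⟩, b, -, hsize, rfl⟩
  linarith

theorem isGreatest_achievablePowers_pair_of_lt_quarter (hx0 : 0 ≤ x) (hx : x < 1 / 4) :
    IsGreatest (achievablePowers {0, 1} x) 0 := by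
  refine ⟨⟨0, .inl rfl, 0, .inl rfl, by linarith, by norm_num⟩, ?_⟩
  rintro v ⟨a, ha, b, hb, hsize, rfl⟩
  rcases ha with rfl | rfl <;> rcases hb with rfl | rfl <;> linarith

theorem isGreatest_achievablePowers_pair_of_quarter_le (hx0 : 1 / 4 ≤ x) (hx : x < 1) :
    IsGreatest (achievablePowers {0, 1} x) (1 / 2) := by
  refine ⟨⟨1, .inr rfl, 0, .inl rfl, by linarith, by norm_num⟩, ?_⟩
  rintro v ⟨a, ha, b, hb, hsize, rfl⟩
  rcases ha with rfl | rfl <;> rcases hb with rfl | rfl <;> linarith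

end Values

end QH

/-- On `Ω = {0,1}` with `ℙ{0} = ℙ{1} = 1/2`, `𝒢 = {1}` and
`ℋ = {H₀}` with `H₀(0) = 1/2`, `H₀(1) = 3/2`, the randomized value is `V(x) = 2x` on
`[0,1/4)`, `(2x+1)/3` on `[1/4,1)`, and `1` on `[1,∞)`, while the pure value is
`V₁(x) = 0` on `[0,1/4)`, `1/2` on `[1/4,1)`, and `1` on `[1,∞)`; in particular
`V₁(x) < V(x)` for every `x ∈ (0,1)` with `x ≠ 1/4`. -/
theorem stmt_17 :
    let Gs : Set (Bool → ℝ) := {fun _ => 1}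
    let Hs : Set (Bool → ℝ) := {fun b => if b then (3 / 2 : ℝ) else 1 / 2}
    (∀ x : ℝ, 0 ≤ x → x < 1 / 4 → QH.V QH.muTwo Gs Hs x = 2 * x) ∧
    (∀ x : ℝ, 1 / 4 ≤ x → x < 1 → QH.V QH.muTwo Gs Hs x = (2 * x + 1) / 3) ∧
    (∀ x : ℝ, 1 ≤ x → QH.V QH.muTwo Gs Hs x = 1) ∧
    (∀ x : ℝ, 0 ≤ x → x < 1 / 4 → QH.V1 QH.muTwo Gs Hs x = 0) ∧
    (∀ x : ℝ, 1 / 4 ≤ x → x < 1 → QH.V1 QH.muTwo Gs Hs x = 1 / 2) ∧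
    (∀ x : ℝ, 1 ≤ x → QH.V1 QH.muTwo Gs Hs x = 1) ∧
    (∀ x : ℝ, 0 < x → x < 1 → x ≠ 1 / 4 →
      QH.V1 QH.muTwo Gs Hs x < QH.V QH.muTwo Gs Hs x) := by
  intro Gs Hs
  have hV (x : ℝ) : QH.V QH.muTwo Gs Hs x = sSup (QH.achievablePowers (Set.Icc 0 1) x) := by
    rw [QH.V, ← QH.powerInf_image_eq_achievablePowers subset_rfl]
    congr
    exact (Set.sep_eq_self_iff_mem_true.2 fun X hX => hX.1.2).symm
  have hV1 (x : ℝ) : QH.V1 QH.muTwo Gs Hs x = sSup (QH.achievablePowers {0, 1} x) := by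
    rw [QH.V1, ← QH.powerInf_image_eq_achievablePowers QH.pair_subset_Icc]
    rfl
  simp only [hV, hV1]
  refine ⟨fun x h0 h => (QH.isGreatest_achievablePowers_Icc_of_lt_quarter h0 h).csSup_eq,
    fun x h0 h => (QH.isGreatest_achievablePowers_Icc_of_quarter_le h0 h).csSup_eq,
    fun x h =>
      (QH.isGreatest_achievablePowers_of_one_le subset_rfl ⟨zero_le_one, le_rfl⟩ h).csSup_eq,
    fun x h0 h => (QH.isGreatest_achievablePowers_pair_of_lt_quarter h0 h).csSup_eq,
    fun x h0 h => (QH.isGreatest_achievablePowers_pair_of_quarter_le h0 h).csSup_eq,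
    fun x h =>
      (QH.isGreatest_achievablePowers_of_one_le QH.pair_subset_Icc (.inr rfl) h).csSup_eq,
    fun x h0 h1 hne => ?_⟩
  rcases hne.lt_or_gt with h | h
  · rw [(QH.isGreatest_achievablePowers_pair_of_lt_quarter h0.le h).csSup_eq,
      (QH.isGreatest_achievablePowers_Icc_of_lt_quarter h0.le h).csSup_eq]
    linarith
  · rw [(QH.isGreatest_achievablePowers_pair_of_quarter_le h.le h1).csSup_eq,
      (QH.isGreatest_achievablePowers_Icc_of_quarter_le h.le h1).csSup_eq]
    linarith
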